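/- Let n, m ≥ 1 and let B_1, ..., B_m be n×n real antisymmetric (skew-symmetric) matrices. Then Σ_{r,s=1}^m ‖[B_r, B_s]‖² ≤ (Σ_{r=1}^m ‖B_r‖²)². -/

import Mathlib

open Matrix BigOperators

/-- The squared Frobenius norm: sum of squares of the entries. -/
noncomputable def frobSq {n : ℕ} (A : Matrix (Fin n) (Fin n) ℝ) : ℝ :=
  ∑ i, ∑ j, (A i j) ^ 2

/-- The commutator of two matrices. -/
def mcomm {n : ℕ} (A B : Matrix (Fin n) (Fin n) ℝ) : Matrix (Fin n) (Fin n) ℝ :=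
  A * B - B * A

/-!
Summing over pairs, it suffices that `‖[X, A]‖² ≤ ‖X‖² ‖A‖²` for real antisymmetric `X`, `A`.
Diagonalise the Hermitian matrix `H = i X` as `H = V D V*` with `D = diag d` real. As `Hᵀ = -H`,
the conjugate matrix `V̄` diagonalises `H` with eigenvalues `-d`, so `d` and `-d` take the same
values with the same multiplicities; and `V* [H, A] V̄ = D B + B D` with `B = V* A V̄`
antisymmetric, hence with zero diagonal. So `‖[X, A]‖² = ∑_{a ≠ b} (d a + d b)² |B a b|²`, with
`‖A‖² = ∑ |B a b|²` and `‖X‖² = ∑ (d c)²`, and the symmetry of the spectrum gives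
`(d a + d b)² ≤ ∑ (d c)²` whenever `a ≠ b`.
-/

open Finset

section

variable {ι : Type*} [Fintype ι]

theorem sq_add_le_sum_sq_of_map_neg {d : ι → ℝ}
    (hd : univ.val.map (-d) = univ.val.map d) {a b : ι} (hab : a ≠ b) :
    (d a + d b) ^ 2 ≤ ∑ c, d c ^ 2 := by
  have hle : ∀ c, d c ^ 2 ≤ ∑ c, d c ^ 2 := fun c =>
    single_le_sum (f := fun c => d c ^ 2) (fun _ _ => sq_nonneg _) (mem_univ c)
  by_cases hdeg : d a = 0 ∨ d b = 0 ∨ d a + d b = 0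
  · rcases hdeg with h | h | h
    · simpa [h] using hle b
    · simpa [h] using hle a
    · simpa [h] using sum_nonneg fun c _ => sq_nonneg (d c)
  push Not at hdeg
  obtain ⟨ha, hb, hab'⟩ := hdeg
  classical
  -- `φ` keeps only the values `d a`, `d b`; by the `±` symmetry of `d` the values `-d a`, `-d b`
  -- carry the same total weight, and the two sets of values are disjoint.
  set P : ℝ → Prop := fun t => t = d a ∨ t = d b
  set φ : ℝ → ℝ := fun t => if P t then t ^ 2 else 0
  have hφ_symm : ∑ c, φ (-d c) = ∑ c, φ (d c) := by
    have := congrArg (fun s => (s.map φ).sum) hd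
    simp only [Multiset.map_map] at this
    exact this
  have hφ_pair : ∀ t, φ t + φ (-t) ≤ t ^ 2 := by
    intro t
    by_cases h1 : P t <;> by_cases h2 : P (-t) <;> simp only [φ, h1, h2, if_true, if_false]
    · exfalso
      rcases h1 with rfl | rfl <;> rcases h2 with h2 | h2
      exacts [ha (by linarith), hab' (by linarith), hab' (by linarith), hb (by linarith)]
    all_goals nlinarith [sq_nonneg t]
  have hφ_ab : d a ^ 2 + d b ^ 2 ≤ ∑ c, φ (d c) := by
    have : ∑ c ∈ {a, b}, φ (d c) ≤ ∑ c, φ (d c) :=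
      sum_le_sum_of_subset_of_nonneg (subset_univ _) fun c _ _ => by
        simp only [φ]; split_ifs <;> positivity
    simpa [sum_pair hab, φ, P] using this
  calc (d a + d b) ^ 2 ≤ 2 * (d a ^ 2 + d b ^ 2) := by nlinarith [sq_nonneg (d a - d b)]
    _ ≤ ∑ c, (φ (d c) + φ (-d c)) := by rw [sum_add_distrib, hφ_symm]; linarith
    _ ≤ ∑ c, d c ^ 2 := sum_le_sum fun c _ => hφ_pair (d c)

noncomputable def cfrobSq (M : Matrix ι ι ℂ) : ℝ := ∑ i, ∑ j, Complex.normSq (M i j)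

theorem cfrobSq_eq_re_trace (M : Matrix ι ι ℂ) : cfrobSq M = (M * Mᴴ).trace.re := by
  simp [cfrobSq, trace, mul_apply, Complex.re_sum, Complex.mul_conj]

theorem cfrobSq_mul_mul_of_mem_unitaryGroup [DecidableEq ι] {U W : Matrix ι ι ℂ}
    (hU : U ∈ unitaryGroup ι ℂ) (hW : W ∈ unitaryGroup ι ℂ) (M : Matrix ι ι ℂ) :
    cfrobSq (U * M * W) = cfrobSq M := by
  have hU' : Uᴴ * U = 1 := Unitary.star_mul_self_of_mem hU
  have hW' : W * Wᴴ = 1 := Unitary.mul_star_self_of_mem hW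
  rw [cfrobSq_eq_re_trace, cfrobSq_eq_re_trace, conjTranspose_mul, conjTranspose_mul,
    show U * M * W * (Wᴴ * (Mᴴ * Uᴴ)) = U * (M * Mᴴ * Uᴴ) by
      simp only [Matrix.mul_assoc, ← Matrix.mul_assoc W, hW', Matrix.one_mul],
    trace_mul_comm, Matrix.mul_assoc, hU', Matrix.mul_one]

theorem cfrobSq_smul (c : ℂ) (M : Matrix ι ι ℂ) :
    cfrobSq (c • M) = Complex.normSq c * cfrobSq M := by
  simp [cfrobSq, mul_sum]

theorem cfrobSq_diagonal_mul_add_mul_diagonal [DecidableEq ι] (d : ι → ℝ) (B : Matrix ι ι ℂ) :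
    cfrobSq (diagonal (fun c => (d c : ℂ)) * B + B * diagonal (fun c => (d c : ℂ)))
      = ∑ a, ∑ b, (d a + d b) ^ 2 * Complex.normSq (B a b) := by
  refine sum_congr rfl fun a _ => sum_congr rfl fun b _ => ?_
  rw [Matrix.add_apply, diagonal_mul, mul_diagonal, mul_comm (B a b), ← add_mul,
    ← Complex.ofReal_add, Complex.normSq_mul, Complex.normSq_ofReal, sq]

theorem cfrobSq_diagonal [DecidableEq ι] (d : ι → ℝ) :
    cfrobSq (diagonal (fun c => (d c : ℂ))) = ∑ c, d c ^ 2 := by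
  simp [cfrobSq, diagonal_apply, apply_ite, sq]

theorem sum_sq_add_mul_normSq_le {d : ι → ℝ} (hd : univ.val.map (-d) = univ.val.map d)
    {B : Matrix ι ι ℂ} (hB : Bᵀ = -B) :
    ∑ a, ∑ b, (d a + d b) ^ 2 * Complex.normSq (B a b) ≤ (∑ c, d c ^ 2) * cfrobSq B := by
  rw [cfrobSq, mul_sum]
  refine sum_le_sum fun a _ => ?_
  rw [mul_sum]
  refine sum_le_sum fun b _ => ?_
  rcases eq_or_ne a b with rfl | hab
  · have hBaa : B a a = 0 := by
      have := congrFun₂ hB a a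
      rw [transpose_apply, neg_apply] at this
      linear_combination this / 2
    simp [hBaa]
  · exact mul_le_mul_of_nonneg_right (sq_add_le_sum_sq_of_map_neg hd hab) (Complex.normSq_nonneg _)

theorem Matrix.IsHermitian.card_eigenvalues_ne [DecidableEq ι] {H : Matrix ι ι ℂ}
    (hH : H.IsHermitian) (μ : ℝ) : #{c | hH.eigenvalues c ≠ μ} = (H - (μ : ℂ) • 1).rank := by
  have hshift : H - (μ : ℂ) • 1 = Unitary.conjStarAlgAut ℂ _ hH.eigenvectorUnitary
      (diagonal fun c => ((hH.eigenvalues c - μ : ℝ) : ℂ)) := by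
    conv_lhs => rw [hH.spectral_theorem]
    rw [← map_one (Unitary.conjStarAlgAut ℂ _ hH.eigenvectorUnitary), ← map_smul, ← map_sub]
    congr 1
    ext i j
    by_cases h : i = j <;> simp [h]
  rw [hshift, Unitary.conjStarAlgAut_apply, ← Unitary.coe_star]
  simp [-isUnit_iff_ne_zero, -Unitary.coe_star, rank_diagonal, sub_eq_zero, Fintype.card_subtype]

theorem Matrix.IsHermitian.map_neg_eigenvalues [DecidableEq ι] {H : Matrix ι ι ℂ}
    (hH : H.IsHermitian) (hHT : Hᵀ = -H) :
    univ.val.map (-hH.eigenvalues) = univ.val.map hH.eigenvalues := by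
  have hcard (μ : ℝ) : #{c | hH.eigenvalues c ≠ -μ} = #{c | hH.eigenvalues c ≠ μ} := by
    have hneg : (H - ((-μ : ℝ) : ℂ) • 1)ᵀ = (-1 : ℂ) • (H - (μ : ℂ) • 1) := by
      rw [transpose_sub, hHT]; simp; abel
    rw [hH.card_eigenvalues_ne, hH.card_eigenvalues_ne, ← (H - _).rank_transpose, hneg,
      rank_smul_of_mem_nonZeroDivisors _ (mem_nonZeroDivisors_of_ne_zero (by norm_num))]
  ext μ
  rw [show -hH.eigenvalues = Neg.neg ∘ hH.eigenvalues from rfl, ← Multiset.map_map]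
  conv_lhs => rw [← neg_neg μ, Multiset.count_map_eq_count' _ _ neg_injective]
  simp only [Multiset.count_map, ← filter_val, card_val, eq_comm (a := μ), eq_comm (a := -μ)]
  have hμ := card_filter_add_card_filter_not (s := univ) (p := fun c => hH.eigenvalues c = μ)
  have hnegμ := card_filter_add_card_filter_not (s := univ) (p := fun c => hH.eigenvalues c = -μ)
  have := hcard μ
  simp only [ne_eq] at this
  omega

theorem cfrobSq_commutator_le [DecidableEq ι] {H A : Matrix ι ι ℂ} (hH : H.IsHermitian)
    (hHT : Hᵀ = -H) (hAT : Aᵀ = -A) : cfrobSq (H * A - A * H) ≤ cfrobSq H * cfrobSq A := by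
  set V : Matrix ι ι ℂ := ↑hH.eigenvectorUnitary
  set D : Matrix ι ι ℂ := diagonal fun c => (hH.eigenvalues c : ℂ)
  have hV : V ∈ unitaryGroup ι ℂ := hH.eigenvectorUnitary.2
  have hVV : star V * V = 1 := Unitary.star_mul_self_of_mem hV
  have hspec : H = V * D * star V := by
    have := hH.spectral_theorem
    rwa [Unitary.conjStarAlgAut_apply] at this
  set W := (star V)ᵀ
  have hW : W ∈ unitaryGroup ι ℂ := transpose_mem_unitaryGroup_iff.mpr (Unitary.star_mem hV)
  have hnormH : cfrobSq H = ∑ c, hH.eigenvalues c ^ 2 := by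
    conv_lhs => rw [hspec]
    rw [cfrobSq_mul_mul_of_mem_unitaryGroup hV (Unitary.star_mem hV), cfrobSq_diagonal]
  have hVH : star V * H = D * star V := by
    rw [hspec, ← Matrix.mul_assoc, ← Matrix.mul_assoc, hVV, Matrix.one_mul]
  -- `W` is the entrywise conjugate of `V`; as `H` is Hermitian with `Hᵀ = -H`, its columns are
  -- eigenvectors of `H` for the negated eigenvalues.
  have hHW : H * W = -(W * D) := by
    have hVW : Vᵀ * W = 1 := by rw [← transpose_mul, hVV, transpose_one]
    rw [← neg_neg H, ← hHT, hspec, transpose_mul, transpose_mul, diagonal_transpose,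
      Matrix.neg_mul, Matrix.mul_assoc, Matrix.mul_assoc, hVW, Matrix.mul_one]
  set B := star V * A * W
  have hBT : Bᵀ = -B := by
    simp only [B, W, transpose_mul, transpose_transpose, hAT, Matrix.neg_mul, Matrix.mul_neg,
      Matrix.mul_assoc]
  have hconj : star V * (H * A - A * H) * W = D * B + B * D := by
    simp only [B, Matrix.mul_sub, Matrix.sub_mul, ← Matrix.mul_assoc, hVH]
    simp only [Matrix.mul_assoc, hHW, Matrix.mul_neg, sub_neg_eq_add]
  calc cfrobSq (H * A - A * H) = cfrobSq (D * B + B * D) := by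
        rw [← hconj, cfrobSq_mul_mul_of_mem_unitaryGroup (Unitary.star_mem hV) hW]
    _ = ∑ a, ∑ b, (hH.eigenvalues a + hH.eigenvalues b) ^ 2 * Complex.normSq (B a b) :=
        cfrobSq_diagonal_mul_add_mul_diagonal _ _
    _ ≤ (∑ c, hH.eigenvalues c ^ 2) * cfrobSq B :=
        sum_sq_add_mul_normSq_le (hH.map_neg_eigenvalues hHT) hBT
    _ = cfrobSq H * cfrobSq A := by
        rw [cfrobSq_mul_mul_of_mem_unitaryGroup (Unitary.star_mem hV) hW, hnormH]

end

theorem cfrobSq_map_ofReal {n : ℕ} (A : Matrix (Fin n) (Fin n) ℝ) :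
    cfrobSq (A.map (↑)) = frobSq A := by
  simp [cfrobSq, frobSq, Complex.normSq_ofReal, sq]

theorem frobSq_mcomm_le {n : ℕ} {X A : Matrix (Fin n) (Fin n) ℝ} (hX : Xᵀ = -X) (hA : Aᵀ = -A) :
    frobSq (mcomm X A) ≤ frobSq X * frobSq A := by
  set X' : Matrix (Fin n) (Fin n) ℂ := X.map (↑)
  set A' : Matrix (Fin n) (Fin n) ℂ := A.map (↑)
  have hX'T : X'ᵀ = -X' := by rw [← transpose_map, hX, Matrix.map_neg _ Complex.ofReal_neg]
  have hA'T : A'ᵀ = -A' := by rw [← transpose_map, hA, Matrix.map_neg _ Complex.ofReal_neg]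
  have hH : (Complex.I • X').IsHermitian := by
    have hX'H : X'ᴴ = X'ᵀ := by ext i j; simp [X']
    rw [IsHermitian, conjTranspose_smul, hX'H, hX'T, Complex.star_def, Complex.conj_I, smul_neg,
      neg_smul, neg_neg]
  have hHT : (Complex.I • X')ᵀ = -(Complex.I • X') := by rw [transpose_smul, hX'T, smul_neg]
  have hcomm : (mcomm X A).map (↑) = X' * A' - A' * X' := by
    have := Complex.ofRealHom.mapMatrix.map_sub (X * A) (A * X)
    rw [map_mul, map_mul] at this
    exact this
  calc frobSq (mcomm X A) = cfrobSq ((Complex.I • X') * A' - A' * (Complex.I • X')) := by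
        rw [smul_mul_assoc, mul_smul_comm, ← smul_sub, cfrobSq_smul, Complex.normSq_I, one_mul,
          ← hcomm, cfrobSq_map_ofReal]
    _ ≤ cfrobSq (Complex.I • X') * cfrobSq A' := cfrobSq_commutator_le hH hHT hA'T
    _ = frobSq X * frobSq A := by
        rw [cfrobSq_smul, Complex.normSq_I, one_mul, cfrobSq_map_ofReal, cfrobSq_map_ofReal]

theorem ddvv_inequality_antisymmetric (n m : ℕ)
    (B : Fin m → Matrix (Fin n) (Fin n) ℝ) (hskew : ∀ r, (B r)ᵀ = -(B r)) :
    ∑ r, ∑ s, frobSq (mcomm (B r) (B s)) ≤ (∑ r, frobSq (B r)) ^ 2 := by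
  calc ∑ r, ∑ s, frobSq (mcomm (B r) (B s)) ≤ ∑ r, ∑ s, frobSq (B r) * frobSq (B s) :=
        sum_le_sum fun r _ => sum_le_sum fun s _ => frobSq_mcomm_le (hskew r) (hskew s)
    _ = (∑ r, frobSq (B r)) ^ 2 := by rw [sq, sum_mul_sum]
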